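/- Let f be L-smooth with f(x₀) − min f ≤ M. Suppose a sequence x₀, x₁, …, x_T satisfies f_t(x_{t+1}) − min_x f_t(x) ≤ Γ for all t, where f_t(x) = f(x) + (3L/2)‖x − x_t‖². Then (1/T)∑_{t=1}^{T} ‖∇f(x_t)‖² ≤ (8L/T)(M + TΓ). -/

import Mathlib

/-!
A Hessian bound `L` makes `∇f` `L`-Lipschitz, hence `f` lies below its quadratic model
`f a + ⟪∇f a, b - a⟫ + L/2 ‖b - a‖²`. Comparing the approximate proximal point `x (t + 1)` with
the gradient step `x t - (4L)⁻¹ ∇f (x t)` in the proximal objective shows that each step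
decreases `f` by at least `‖∇f (x t)‖² / (8L) - Γ`. Summing over `t < T` telescopes to
`f (x 0) - f (x T) + TΓ ≤ M + TΓ`.
-/

open Finset
open scoped NNReal Gradient

section Smooth

variable {E : Type*} [NormedAddCommGroup E] [NormedSpace ℝ E]

theorem lipschitzWith_fderiv_of_norm_iteratedFDeriv_two_le {F : Type*} [NormedAddCommGroup F]
    [NormedSpace ℝ F] {f : E → F} {K : ℝ≥0} (hf : ContDiff ℝ 2 f)
    (hK : ∀ z, ‖iteratedFDeriv ℝ 2 f z‖ ≤ K) : LipschitzWith K (fderiv ℝ f) := by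
  refine lipschitzWith_of_nnnorm_fderiv_le
    ((hf.fderiv_right (m := 1) le_rfl).differentiable one_ne_zero) fun z ↦ ?_
  rw [← NNReal.coe_le_coe, coe_nnnorm, ← norm_iteratedFDeriv_one, norm_iteratedFDeriv_fderiv]
  exact hK z

theorem le_add_fderiv_add_of_lipschitzWith_fderiv {f : E → ℝ} {K : ℝ≥0}
    (hf : Differentiable ℝ f) (hlip : LipschitzWith K (fderiv ℝ f)) (a b : E) :
    f b ≤ f a + fderiv ℝ f a (b - a) + K / 2 * ‖b - a‖ ^ 2 := by
  set v := b - a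
  have hline (t : ℝ) :
      HasDerivAt (fun t : ℝ ↦ f (a + t • v)) (fderiv ℝ f (a + t • v) v) t := by
    refine (hf _).hasFDerivAt.comp_hasDerivAt t ?_
    simpa using ((hasDerivAt_id t).smul_const v).const_add a
  have hmodel (t : ℝ) :
      HasDerivAt (fun t : ℝ ↦ f a + t * fderiv ℝ f a v + K / 2 * t ^ 2 * ‖v‖ ^ 2)
        (fderiv ℝ f a v + K * t * ‖v‖ ^ 2) t := by
    refine ((((hasDerivAt_id' t).mul_const (fderiv ℝ f a v)).const_add (f a)).add
      (((hasDerivAt_pow 2 t).const_mul ((K : ℝ) / 2)).mul_const (‖v‖ ^ 2))).congr_deriv ?_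
    push_cast; ring
  have hslope (t : ℝ) (ht : 0 ≤ t) :
      fderiv ℝ f (a + t • v) v ≤ fderiv ℝ f a v + K * t * ‖v‖ ^ 2 :=
    calc fderiv ℝ f (a + t • v) v
        = fderiv ℝ f a v + (fderiv ℝ f (a + t • v) - fderiv ℝ f a) v := by simp
      _ ≤ fderiv ℝ f a v + ‖fderiv ℝ f (a + t • v) - fderiv ℝ f a‖ * ‖v‖ := by
          gcongr; exact (Real.le_norm_self _).trans (ContinuousLinearMap.le_opNorm _ _)
      _ ≤ fderiv ℝ f a v + K * ‖(a + t • v) - a‖ * ‖v‖ := by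
          gcongr; exact hlip.norm_sub_le _ _
      _ = fderiv ℝ f a v + K * t * ‖v‖ ^ 2 := by
          rw [add_sub_cancel_left, norm_smul, Real.norm_of_nonneg ht]; ring
  have key := image_le_of_deriv_right_le_deriv_boundary (a := 0) (b := 1)
    (fun t _ ↦ (hline t).continuousAt.continuousWithinAt)
    (fun t _ ↦ (hline t).hasDerivWithinAt) (by simp)
    (fun t _ ↦ (hmodel t).continuousAt.continuousWithinAt)
    (fun t _ ↦ (hmodel t).hasDerivWithinAt) (fun t ht ↦ hslope t ht.1)
    (Set.right_mem_Icc.2 zero_le_one)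
  simpa [v] using key

end Smooth

section Inner

variable {E : Type*} [NormedAddCommGroup E] [InnerProductSpace ℝ E] [CompleteSpace E]

theorem norm_gradient_sq_le_of_approx_proximal_step {f : E → ℝ} {K : ℝ≥0} {Γ : ℝ}
    (hK : 0 < K) (hf : Differentiable ℝ f) (hlip : LipschitzWith K (fderiv ℝ f)) {a a' : E}
    (hprox : ∀ y, f a' + 3 * K / 2 * ‖a' - a‖ ^ 2 ≤ f y + 3 * K / 2 * ‖y - a‖ ^ 2 + Γ) :
    ‖∇ f a‖ ^ 2 ≤ 8 * K * (f a - f a' + Γ) := by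
  have hK' : (0 : ℝ) < K := hK
  set c : ℝ := (4 * K)⁻¹
  set y := a - c • ∇ f a
  have hstep : y - a = -(c • ∇ f a) := by simp [y]
  have hdist : ‖y - a‖ ^ 2 = c ^ 2 * ‖∇ f a‖ ^ 2 := by
    rw [hstep, norm_neg, norm_smul, Real.norm_of_nonneg (by positivity), mul_pow]
  have hdesc := le_add_fderiv_add_of_lipschitzWith_fderiv hf hlip a y
  rw [hdist, ← inner_gradient_left, hstep, inner_neg_right, real_inner_smul_right,
    real_inner_self_eq_norm_sq] at hdesc
  have hcomp := hprox y
  rw [hdist] at hcomp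
  have hcoeff : -(c * ‖∇ f a‖ ^ 2) + K / 2 * (c ^ 2 * ‖∇ f a‖ ^ 2)
      + 3 * K / 2 * (c ^ 2 * ‖∇ f a‖ ^ 2) = -(‖∇ f a‖ ^ 2 / (8 * K)) := by
    simp only [c]; field_simp; ring
  have hfa : ‖∇ f a‖ ^ 2 / (8 * K) ≤ f a - f a' + Γ := by
    nlinarith [norm_nonneg (a' - a)]
  rwa [div_le_iff₀' (by positivity)] at hfa

end Inner

theorem sum_range_le_of_le_mul_sub_add {u g : ℕ → ℝ} {c Γ : ℝ} {T : ℕ}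
    (h : ∀ t < T, g t ≤ c * (u t - u (t + 1) + Γ)) :
    ∑ t ∈ range T, g t ≤ c * (u 0 - u T + T * Γ) :=
  calc ∑ t ∈ range T, g t ≤ ∑ t ∈ range T, c * (u t - u (t + 1) + Γ) :=
        sum_le_sum fun t ht ↦ h t (mem_range.1 ht)
    _ = c * (u 0 - u T + T * Γ) := by
        rw [← mul_sum, sum_add_distrib, sum_range_sub', sum_const, card_range, nsmul_eq_mul]

theorem stmt6_general {d : ℕ} (f : EuclideanSpace ℝ (Fin d) → ℝ) (L M Γ fstar : ℝ)
    (hL : 0 < L)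
    (hf : ContDiff ℝ 2 f)
    (hHess : ∀ z, ‖iteratedFDeriv ℝ 2 f z‖ ≤ L)
    (hmin : ∀ y, fstar ≤ f y)
    (T : ℕ)
    (x : ℕ → EuclideanSpace ℝ (Fin d))
    (hM : f (x 0) - fstar ≤ M)
    (happrox : ∀ t < T, ∀ y,
      f (x (t + 1)) + 3 * L / 2 * ‖x (t + 1) - x t‖ ^ 2 ≤
        f y + 3 * L / 2 * ‖y - x t‖ ^ 2 + Γ) :
    (1 / (T : ℝ)) * ∑ t ∈ Finset.range T, ‖gradient f (x t)‖ ^ 2 ≤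
      8 * L / (T : ℝ) * (M + T * Γ) := by
  lift L to ℝ≥0 using hL.le
  have hlip := lipschitzWith_fderiv_of_norm_iteratedFDeriv_two_le hf hHess
  have hsum : ∑ t ∈ range T, ‖∇ f (x t)‖ ^ 2 ≤ 8 * L * (f (x 0) - f (x T) + T * Γ) :=
    sum_range_le_of_le_mul_sub_add fun t ht ↦ norm_gradient_sq_le_of_approx_proximal_step
      (mod_cast hL) (hf.differentiable two_ne_zero) hlip (happrox t ht)
  calc (1 / (T : ℝ)) * ∑ t ∈ range T, ‖∇ f (x t)‖ ^ 2
      ≤ 1 / T * (8 * L * (M + T * Γ)) := by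
        gcongr
        exact hsum.trans (by gcongr; linarith [hmin (x T)])
    _ = 8 * L / T * (M + T * Γ) := by ring

theorem stmt6 {d : ℕ} (f : EuclideanSpace ℝ (Fin d) → ℝ) (L M Γ fstar : ℝ)
    (hL : 0 < L) (hΓ : 0 ≤ Γ)
    (hf : ContDiff ℝ 2 f)
    (hHess : ∀ z, ‖iteratedFDeriv ℝ 2 f z‖ ≤ L)
    (hmin : ∀ y, fstar ≤ f y)
    (T : ℕ) (hT : 1 ≤ T)
    (x : ℕ → EuclideanSpace ℝ (Fin d))
    (hM : f (x 0) - fstar ≤ M)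
    (happrox : ∀ t < T, ∀ y,
      f (x (t + 1)) + 3 * L / 2 * ‖x (t + 1) - x t‖ ^ 2 ≤
        f y + 3 * L / 2 * ‖y - x t‖ ^ 2 + Γ) :
    (1 / (T : ℝ)) * ∑ t ∈ Finset.range T, ‖gradient f (x t)‖ ^ 2 ≤
      8 * L / (T : ℝ) * (M + T * Γ) :=
  stmt6_general f L M Γ fstar hL hf hHess hmin T x hM happrox
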